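/- arXiv:2404.04015 — 7 statements merged into one kernel-verified Lean document; each statement's English description precedes it below -/
import Mathlib

section
/- Consider the flex-EA with lower-bound vector l satisfying l_1 > 0, optimizing a unimodal function f : {0,1}^n → ℝ with L fitness levels. For each j ∈ {1,…,L−1}, let s_j be a lower bound on the probability that, given an individual in fitness level j, flipping one position chosen uniformly at random creates an individual of strictly better fitness. Then the expected runtime of the flex-EA on f is at most 1 + l_1^{−1}·∑_{j=1}^{L−1} s_j^{−1}. In particular, it is at most 1 + n·(L−1)·l_1^{−1}. -/
/-!
Fitness-level argument as a drift argument. Give fitness level `j < L` the weight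
`w j = 1 / (l₁ s_j)` and a solution the potential `∑_{k ≥ level} w k`. Whatever the archive,
the flex-EA samples rate `1` with probability at least `l₁` (the lower bound is respected), and
rate `1` then leaves level `j` with probability at least `s_j`. An improvement lowers the potential
by at least `w j`, and no accepted offspring raises it, so each iteration from a non-optimal state
lowers the expected potential by at least `1`. Summing over time, the expected number of
non-optimal iterations is at most the initial potential, hence at most `∑_j w j`.
-/

open scoped ENNReal Classical

namespace FlexEA

/-- Bit strings of length `n`. -/
abbrev Point (n : ℕ) := Fin n → Bool

/-- Flip the bits of `x` at the positions in `S`. -/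
def flipSet {n : ℕ} (x : Point n) (S : Finset (Fin n)) : Point n :=
  fun j => if j ∈ S then !(x j) else x j

/-- Flip exactly `r` positions of `x`, chosen uniformly at random
(junk value: no flip, if `r > n`). -/
noncomputable def flipPMF (n r : ℕ) (x : Point n) : PMF (Point n) :=
  if h : ((Finset.univ : Finset (Fin n)).powersetCard r).Nonempty then
    (PMF.uniformOfFinset _ h).map (flipSet x)
  else PMF.pure x

/-- The PMF given by real weights `w` supported on `s`
(junk value if the weights do not form a probability vector on `s`). -/
noncomputable def pmfOfWeights {α : Type} [Inhabited α] (w : α → ℝ) (s : Finset α) : PMF α :=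
  if h : (∑ a ∈ s, ENNReal.ofReal (w a)) = 1 ∧ ∀ a ∉ s, ENNReal.ofReal (w a) = 0 then
    PMF.ofFinset (fun a => ENNReal.ofReal (w a)) s h.1 h.2
  else PMF.pure default

/-- The water-filling level `c` used to distribute the remaining probability mass
as evenly as possible over the archive `A`, respecting the lower bounds `l`. -/
noncomputable def waterLevel (n : ℕ) (l : ℕ → ℝ) (A : Finset ℕ) : ℝ :=
  sInf {c : ℝ | 0 ≤ c ∧ (∑ i ∈ Finset.Icc 1 n, if i ∈ A then max (l i) c else l i) = 1}

/-- The frequency vector of the flex-EA: `p i = l i` for inactive rates, and the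
remaining mass is distributed as evenly as possible over the active rates in `A`,
subject to `p i ≥ l i`. -/
noncomputable def freq (n : ℕ) (l : ℕ → ℝ) (A : Finset ℕ) (i : ℕ) : ℝ :=
  if i ∈ Finset.Icc 1 n then (if i ∈ A then max (l i) (waterLevel n l A) else l i) else 0

/-- Sampling a rate `r ∈ {1, …, n}` according to the frequency vector. -/
noncomputable def ratePMF (n : ℕ) (l : ℕ → ℝ) (A : Finset ℕ) : PMF ℕ :=
  pmfOfWeights (freq n l A) (Finset.Icc 1 n)

/-- A state of the flex-EA: current solution `x`, archive `arch` of active rates,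
failure counters `cnt`, and global counter `glob`. -/
structure State (n : ℕ) where
  x : Point n
  arch : Finset ℕ
  cnt : ℕ → ℕ
  glob : ℕ

/-- The deterministic update of the flex-EA state after sampling rate `r`
and offspring `y`, when maximizing `f`. -/
noncomputable def updateState (n : ℕ) (f : Point n → ℝ) (l τ : ℕ → ℝ)
    (s : State n) (r : ℕ) (y : Point n) : State n :=
  if f s.x < f y then
    ⟨y, s.arch ∪ {r}, Function.update s.cnt r 0, 0⟩
  else
    let x' := if f y = f s.x then y else s.x
    let u' := s.glob + 1
    let c' := Function.update s.cnt r (s.cnt r + 1)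
    let m := if h : s.arch.Nonempty then s.arch.min' h else 1
    if τ m / freq n l s.arch m ≤ (u' : ℝ) then
      ⟨x', {1}, Function.update c' 1 0, 0⟩
    else if τ r ≤ (c' r : ℝ) then
      if s.arch.erase r = ∅ then
        ⟨x', {if r + 1 ≤ n then r + 1 else 1},
          Function.update c' (if r + 1 ≤ n then r + 1 else 1) 0, u'⟩
      else ⟨x', s.arch.erase r, c', u'⟩
    else ⟨x', s.arch, c', u'⟩

/-- One iteration of the flex-EA maximizing `f`, with lower-bound vector `l`
and count-bound vector `τ`. -/
noncomputable def step (n : ℕ) (f : Point n → ℝ) (l τ : ℕ → ℝ) (s : State n) :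
    PMF (State n) :=
  (ratePMF n l s.arch).bind fun r =>
    (flipPMF n r s.x).map fun y => updateState n f l τ s r y

/-- `x` is a global optimum (maximum) of `f`. -/
def isOpt (n : ℕ) (f : Point n → ℝ) (x : Point n) : Prop := ∀ y, f y ≤ f x

/-- The flex-EA step, made absorbing in the optimal states (used to express
the hitting time via marginal distributions). -/
noncomputable def stepAbs (n : ℕ) (f : Point n → ℝ) (l τ : ℕ → ℝ) (s : State n) :
    PMF (State n) :=
  if isOpt n f s.x then PMF.pure s else step n f l τ s

/-- Initial state: uniformly random solution, archive `{1}`, all counters `0`. -/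
noncomputable def initPMF (n : ℕ) : PMF (State n) :=
  (PMF.uniformOfFintype (Point n)).map fun x => ⟨x, {1}, fun _ => 0, 0⟩

/-- Distribution of the (absorbed) flex-EA state after `t` iterations. -/
noncomputable def stateAt (n : ℕ) (f : Point n → ℝ) (l τ : ℕ → ℝ) : ℕ → PMF (State n)
  | 0 => initPMF n
  | t + 1 => (stateAt n f l τ t).bind (stepAbs n f l τ)

/-- Expected runtime (number of `f`-evaluations until an optimum of `f` is first
evaluated) of the flex-EA on `f`:  `E[1 + T] = 1 + ∑_{t ≥ 0} Pr[T > t]` where `T`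
is the hitting time of the optimal states. -/
noncomputable def expectedRuntime (n : ℕ) (f : Point n → ℝ) (l τ : ℕ → ℝ) : ℝ≥0∞ :=
  1 + ∑' t : ℕ, (stateAt n f l τ t).toOuterMeasure {s | ¬ isOpt n f s.x}

/-- Number of one-bits of `x`. -/
def oneBits {n : ℕ} (x : Point n) : ℕ := (Finset.univ.filter fun i => x i = true).card

/-- Number of fitness levels of `f` (cardinality of the range of `f`). -/
noncomputable def numLevels (n : ℕ) (f : Point n → ℝ) : ℕ :=
  (Finset.univ.image f).card

/-- Index (from `1` to `numLevels`) of the fitness level of `x`, levels being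
ordered by increasing fitness. -/
noncomputable def levelIdx (n : ℕ) (f : Point n → ℝ) (x : Point n) : ℕ :=
  ((Finset.univ.image f).filter fun v => v ≤ f x).card

/-- Probability that flipping a single position of `x`, chosen uniformly at
random, creates an individual of strictly better fitness. -/
noncomputable def improveProb (n : ℕ) (f : Point n → ℝ) (x : Point n) : ℝ :=
  ((Finset.univ.filter fun i : Fin n => f x < f (flipSet x {i})).card : ℝ) / n

end FlexEA

namespace PMF

variable {α β : Type*}

theorem tsum_pure_mul (a : α) (g : α → ℝ≥0∞) : ∑' b, pure a b * g b = g a := by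
  rw [tsum_eq_single a fun b hb => by simp [pure_apply, hb]]
  simp [pure_apply]

theorem tsum_bind_mul (p : PMF α) (q : α → PMF β) (g : β → ℝ≥0∞) :
    ∑' b, p.bind q b * g b = ∑' a, p a * ∑' b, q a b * g b := by
  simp only [bind_apply, ← ENNReal.tsum_mul_right, ← ENNReal.tsum_mul_left, mul_assoc]
  exact ENNReal.tsum_comm

theorem tsum_map_mul (p : PMF α) (f : α → β) (g : β → ℝ≥0∞) :
    ∑' b, p.map f b * g b = ∑' a, p a * g (f a) := by
  simp only [map, tsum_bind_mul, Function.comp_apply, tsum_pure_mul]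

theorem tsum_mul_le_tsum_mul {p : PMF α} {g h : α → ℝ≥0∞} (hle : ∀ a ∈ p.support, g a ≤ h a) :
    ∑' a, p a * g a ≤ ∑' a, p a * h a := by
  refine ENNReal.tsum_le_tsum fun a => ?_
  by_cases ha : p a = 0
  · simp [ha]
  · gcongr
    exact hle a ha

theorem tsum_mul_const (p : PMF α) (c : ℝ≥0∞) : ∑' a, p a * c = c := by
  rw [ENNReal.tsum_mul_right, tsum_coe, one_mul]

theorem tsum_mul_le_of_le {p : PMF α} {g : α → ℝ≥0∞} {c : ℝ≥0∞} (hle : ∀ a ∈ p.support, g a ≤ c) :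
    ∑' a, p a * g a ≤ c :=
  (tsum_mul_le_tsum_mul hle).trans_eq (tsum_mul_const p c)

theorem tsum_mul_add_tsum_mul_le {p : PMF α} {g h k : α → ℝ≥0∞}
    (hle : ∀ a ∈ p.support, g a + h a ≤ k a) :
    ∑' a, p a * g a + ∑' a, p a * h a ≤ ∑' a, p a * k a := by
  simpa only [← ENNReal.tsum_add, ← mul_add] using tsum_mul_le_tsum_mul hle

theorem tsum_mul_indicator_const (p : PMF α) (s : Set α) (c : ℝ≥0∞) :
    ∑' a, p a * s.indicator (fun _ => c) a = c * p.toOuterMeasure s := by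
  rw [toOuterMeasure_apply, ← ENNReal.tsum_mul_left]
  refine tsum_congr fun a => ?_
  by_cases ha : a ∈ s <;> simp [ha, mul_comm]

theorem tsum_toOuterMeasure_le_of_drift (K : α → PMF α) (μ : ℕ → PMF α)
    (hμ : ∀ t, μ (t + 1) = (μ t).bind K) {I : α → Prop} (hI₀ : ∀ a ∈ (μ 0).support, I a)
    (hIK : ∀ a, I a → ∀ b ∈ (K a).support, I b) (V : α → ℝ≥0∞) (S : Set α)
    (hV : ∀ a, I a → ∑' b, K a b * V b + S.indicator 1 a ≤ V a) :
    ∑' t, (μ t).toOuterMeasure S ≤ ∑' a, μ 0 a * V a := by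
  have hI : ∀ t, ∀ a ∈ (μ t).support, I a := by
    intro t
    induction t with
    | zero => exact hI₀
    | succ t ih =>
      intro b hb
      rw [hμ, mem_support_bind_iff] at hb
      obtain ⟨a, ha, hab⟩ := hb
      exact hIK a (ih a ha) b hab
  set E : ℕ → ℝ≥0∞ := fun t => ∑' a, μ t a * V a
  have hstep : ∀ t, (μ t).toOuterMeasure S + E (t + 1) ≤ E t := by
    intro t
    rw [add_comm, ← one_mul ((μ t).toOuterMeasure S), ← tsum_mul_indicator_const]
    simp only [E, hμ, tsum_bind_mul]
    exact tsum_mul_add_tsum_mul_le fun a ha => hV a (hI t a ha)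
  have htelescope : ∀ N, ∑ t ∈ Finset.range N, (μ t).toOuterMeasure S + E N ≤ E 0 := by
    intro N
    induction N with
    | zero => simp
    | succ N ih =>
      rw [Finset.sum_range_succ, add_assoc]
      exact (add_le_add_right (hstep N) _).trans ih
  exact ENNReal.tsum_le_of_sum_range_le fun N => le_self_add.trans (htelescope N)

end PMF

namespace FlexEA

variable {n : ℕ}

section Rates

variable {l : ℕ → ℝ} {A : Finset ℕ}

-- `sInf` of an empty set is junk (`0`); the intermediate value theorem rules that out.
theorem waterLevel_spec (hl0 : ∀ i, 0 ≤ l i) (hlsum : ∑ i ∈ Finset.Icc 1 n, l i ≤ 1)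
    (hA : A.Nonempty) (hAsub : A ⊆ Finset.Icc 1 n) :
    0 ≤ waterLevel n l A ∧
      (∑ i ∈ Finset.Icc 1 n, if i ∈ A then max (l i) (waterLevel n l A) else l i) = 1 := by
  set g : ℝ → ℝ := fun c => ∑ i ∈ Finset.Icc 1 n, if i ∈ A then max (l i) c else l i
  have hg : Continuous g := continuous_finsetSum _ fun i _ => by split_ifs <;> fun_prop
  have hg0 : g 0 ≤ 1 := by
    refine le_of_eq_of_le (Finset.sum_congr rfl fun i _ => ?_) hlsum
    simp [max_eq_left (hl0 i)]
  have hg1 : 1 ≤ g 1 := by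
    obtain ⟨a, ha⟩ := hA
    calc (1 : ℝ) ≤ if a ∈ A then max (l a) 1 else l a := by simp [ha]
      _ ≤ g 1 := Finset.single_le_sum (f := fun i => if i ∈ A then max (l i) 1 else l i)
          (fun i _ => by split_ifs <;> simp [hl0 i]) (hAsub ha)
  obtain ⟨c, hc, hgc⟩ := intermediate_value_Icc zero_le_one hg.continuousOn ⟨hg0, hg1⟩
  have hclosed : IsClosed {c : ℝ | 0 ≤ c ∧ g c = 1} :=
    isClosed_Ici.inter (isClosed_singleton.preimage hg)
  exact hclosed.csInf_mem ⟨c, hc.1, hgc⟩ ⟨0, fun _ h => h.1⟩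

theorem freq_nonneg (hl0 : ∀ i, 0 ≤ l i) (i : ℕ) : 0 ≤ freq n l A i := by
  unfold freq
  split_ifs
  exacts [(hl0 i).trans (le_max_left _ _), hl0 i, le_rfl]

theorem ratePMF_apply (hl0 : ∀ i, 0 ≤ l i) (hlsum : ∑ i ∈ Finset.Icc 1 n, l i ≤ 1)
    (hA : A.Nonempty) (hAsub : A ⊆ Finset.Icc 1 n) (r : ℕ) :
    ratePMF n l A r = ENNReal.ofReal (freq n l A r) := by
  have hsum : ∑ i ∈ Finset.Icc 1 n, ENNReal.ofReal (freq n l A i) = 1 := by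
    rw [← ENNReal.ofReal_sum_of_nonneg fun i _ => freq_nonneg hl0 i, ← ENNReal.ofReal_one,
      ← (waterLevel_spec hl0 hlsum hA hAsub).2]
    exact congrArg _ (Finset.sum_congr rfl fun i hi => by simp [freq, hi])
  rw [ratePMF, pmfOfWeights, dif_pos ⟨hsum, fun i hi => by simp [freq, hi]⟩]
  rfl

theorem mem_Icc_of_mem_support_ratePMF (hl0 : ∀ i, 0 ≤ l i)
    (hlsum : ∑ i ∈ Finset.Icc 1 n, l i ≤ 1) (hA : A.Nonempty) (hAsub : A ⊆ Finset.Icc 1 n)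
    {r : ℕ} (hr : r ∈ (ratePMF n l A).support) : r ∈ Finset.Icc 1 n := by
  by_contra h
  rw [PMF.mem_support_iff, ratePMF_apply hl0 hlsum hA hAsub, freq, if_neg h] at hr
  exact hr ENNReal.ofReal_zero

theorem ofReal_le_ratePMF_one (hn : 1 ≤ n) (hl0 : ∀ i, 0 ≤ l i)
    (hlsum : ∑ i ∈ Finset.Icc 1 n, l i ≤ 1) (hA : A.Nonempty) (hAsub : A ⊆ Finset.Icc 1 n) :
    ENNReal.ofReal (l 1) ≤ ratePMF n l A 1 := by
  rw [ratePMF_apply hl0 hlsum hA hAsub, freq, if_pos (Finset.mem_Icc.2 ⟨le_rfl, hn⟩)]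
  exact ENNReal.ofReal_le_ofReal (by split_ifs <;> simp)

end Rates

theorem toOuterMeasure_flipPMF_one (hn : 1 ≤ n) (f : Point n → ℝ) (x : Point n) :
    (flipPMF n 1 x).toOuterMeasure {y | f x < f y} = ENNReal.ofReal (improveProb n f x) := by
  have hcard : (Finset.univ.powersetCard 1 : Finset (Finset (Fin n))).card = n := by simp
  have hne : (Finset.univ.powersetCard 1 : Finset (Finset (Fin n))).Nonempty := by
    rw [← Finset.card_pos, hcard]; omega
  rw [flipPMF, dif_pos hne, PMF.toOuterMeasure_map_apply,
    PMF.toOuterMeasure_uniformOfFinset_apply, hcard, Finset.powersetCard_one, Finset.filter_map,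
    Finset.card_map, improveProb, ENNReal.ofReal_div_of_pos (by exact_mod_cast hn),
    ENNReal.ofReal_natCast, ENNReal.ofReal_natCast]
  rfl

theorem updateState_x (f : Point n → ℝ) (l τ : ℕ → ℝ) (s : State n) (r : ℕ) (y : Point n) :
    (updateState n f l τ s r y).x = if f s.x ≤ f y then y else s.x := by
  unfold updateState
  dsimp only
  split_ifs <;> first | rfl | (exfalso; order)

def State.ArchValid (s : State n) : Prop := s.arch.Nonempty ∧ s.arch ⊆ Finset.Icc 1 n

theorem archValid_updateState (hn : 1 ≤ n) (f : Point n → ℝ) (l τ : ℕ → ℝ) {s : State n}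
    (hs : s.ArchValid) {r : ℕ} (hr : r ∈ Finset.Icc 1 n) (y : Point n) :
    (updateState n f l τ s r y).ArchValid := by
  rw [Finset.mem_Icc] at hr
  unfold updateState
  dsimp only
  split_ifs <;>
    first
    | exact ⟨hs.1.mono Finset.subset_union_left,
        Finset.union_subset hs.2 (by simpa using hr)⟩
    | exact ⟨Finset.singleton_nonempty 1, by simpa using hn⟩
    | exact ⟨Finset.singleton_nonempty _,
        by simp only [Finset.singleton_subset_iff, Finset.mem_Icc]; omega⟩
    | exact ⟨Finset.nonempty_iff_ne_empty.mpr (by assumption),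
        (Finset.erase_subset _ _).trans hs.2⟩
    | exact hs

theorem archValid_of_mem_support_stepAbs (hn : 1 ≤ n) (f : Point n → ℝ) {l : ℕ → ℝ}
    (τ : ℕ → ℝ) (hl0 : ∀ i, 0 ≤ l i) (hlsum : ∑ i ∈ Finset.Icc 1 n, l i ≤ 1) {s : State n}
    (hs : s.ArchValid) {s' : State n} (hs' : s' ∈ (stepAbs n f l τ s).support) :
    s'.ArchValid := by
  unfold stepAbs at hs'
  split_ifs at hs'
  · rw [PMF.support_pure, Set.mem_singleton_iff] at hs'
    rwa [hs']
  · obtain ⟨r, hr, y, -, rfl⟩ := by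
      simpa only [step, PMF.mem_support_bind_iff, PMF.mem_support_map_iff] using hs'
    exact archValid_updateState hn f l τ hs
      (mem_Icc_of_mem_support_ratePMF hl0 hlsum hs.1 hs.2 hr) y

theorem archValid_of_mem_support_initPMF {s : State n} (hn : 1 ≤ n)
    (hs : s ∈ (initPMF n).support) : s.ArchValid := by
  obtain ⟨x, -, rfl⟩ := (PMF.mem_support_map_iff _ _ _).mp hs
  exact ⟨Finset.singleton_nonempty 1, by simpa using hn⟩

section Levels

variable {f : Point n → ℝ} {xopt : Point n}

theorem isOpt_iff_eq (hopt : ∀ y, y ≠ xopt → f y < f xopt) {x : Point n} :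
    isOpt n f x ↔ x = xopt := by
  refine ⟨fun hx => ?_, fun hx y => ?_⟩
  · by_contra hne
    exact (hopt x hne).not_ge (hx xopt)
  · rcases eq_or_ne y xopt with rfl | hy
    · exact hx ▸ le_rfl
    · exact hx ▸ (hopt y hy).le

theorem one_le_levelIdx (f : Point n → ℝ) (x : Point n) : 1 ≤ levelIdx n f x :=
  Finset.card_pos.mpr ⟨f x, by simp⟩

theorem levelIdx_lt_levelIdx {x y : Point n} (h : f x < f y) :
    levelIdx n f x < levelIdx n f y := by
  refine Finset.card_lt_card ⟨Finset.monotone_filter_right _ fun _ _ hv => hv.trans h.le, ?_⟩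
  intro hsub
  exact h.not_ge (Finset.mem_filter.mp (hsub (Finset.mem_filter.mpr ⟨by simp, le_rfl⟩))).2

theorem levelIdx_eq_numLevels (hopt : ∀ y, y ≠ xopt → f y < f xopt) :
    levelIdx n f xopt = numLevels n f := by
  refine congrArg Finset.card (Finset.filter_true_of_mem fun v hv => ?_)
  obtain ⟨y, -, rfl⟩ := Finset.mem_image.mp hv
  exact (isOpt_iff_eq hopt).mpr rfl y

theorem levelIdx_le_numLevels_sub_one (hopt : ∀ y, y ≠ xopt → f y < f xopt) {x : Point n}
    (hx : x ≠ xopt) : levelIdx n f x ≤ numLevels n f - 1 := by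
  rw [← levelIdx_eq_numLevels hopt]
  exact Nat.le_sub_one_of_lt (levelIdx_lt_levelIdx (hopt x hx))

end Levels

noncomputable def levelPot (n : ℕ) (f : Point n → ℝ) (w : ℕ → ℝ≥0∞) (x : Point n) : ℝ≥0∞ :=
  ∑ k ∈ Finset.Icc (levelIdx n f x) (numLevels n f - 1), w k

section LevelPot

variable {f : Point n → ℝ} {w : ℕ → ℝ≥0∞}

theorem levelPot_le_sum (x : Point n) :
    levelPot n f w x ≤ ∑ k ∈ Finset.Icc 1 (numLevels n f - 1), w k :=
  Finset.sum_le_sum_of_subset (Finset.Icc_subset_Icc_left (one_le_levelIdx f x))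

theorem levelPot_add_le {x y : Point n} (hxy : f x < f y)
    (hx : levelIdx n f x ≤ numLevels n f - 1) :
    levelPot n f w y + w (levelIdx n f x) ≤ levelPot n f w x := by
  rw [levelPot, levelPot, Finset.Icc_eq_cons_Ioc hx, Finset.sum_cons, add_comm]
  gcongr
  rw [← Finset.Icc_add_one_left_eq_Ioc]
  exact Finset.Icc_subset_Icc_left (levelIdx_lt_levelIdx hxy)

end LevelPot

theorem tsum_step_levelPot_add_le (hn : 1 ≤ n) (f : Point n → ℝ) {l : ℕ → ℝ} (τ : ℕ → ℝ)
    (hl0 : ∀ i, 0 ≤ l i) (hlsum : ∑ i ∈ Finset.Icc 1 n, l i ≤ 1) (w : ℕ → ℝ≥0∞) {st : State n}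
    (hst : st.ArchValid) (hx : levelIdx n f st.x ≤ numLevels n f - 1) :
    ∑' st', step n f l τ st st' * levelPot n f w st'.x
        + w (levelIdx n f st.x) * (ENNReal.ofReal (l 1) * ENNReal.ofReal (improveProb n f st.x))
      ≤ levelPot n f w st.x := by
  set j := levelIdx n f st.x
  set V := levelPot n f w
  set S := {y : Point n | f st.x < f y}
  have hpoint : ∀ r y,
      V (updateState n f l τ st r y).x + S.indicator (fun _ => w j) y ≤ V st.x := by
    intro r y
    rw [updateState_x]
    rcases lt_trichotomy (f st.x) (f y) with hlt | heq | hgt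
    · rw [if_pos hlt.le, Set.indicator_of_mem (show y ∈ S from hlt)]
      exact levelPot_add_le hlt hx
    · rw [if_pos heq.le, Set.indicator_of_notMem (show y ∉ S from heq.not_lt), add_zero]
      simp only [V, levelPot, levelIdx, heq, le_rfl]
    · rw [if_neg hgt.not_ge, Set.indicator_of_notMem (show y ∉ S from hgt.not_gt), add_zero]
  have hflip : ∀ r, ∑' y, flipPMF n r st.x y * V (updateState n f l τ st r y).x
      + w j * (flipPMF n r st.x).toOuterMeasure S ≤ V st.x := fun r => by
    rw [← PMF.tsum_mul_indicator_const]
    exact (PMF.tsum_mul_add_tsum_mul_le fun y _ => hpoint r y).trans_eq (PMF.tsum_mul_const _ _)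
  have hrate := (PMF.tsum_mul_add_tsum_mul_le (p := ratePMF n l st.arch)
    fun r _ => hflip r).trans_eq (PMF.tsum_mul_const _ _)
  have himprove : w j * (ENNReal.ofReal (l 1) * ENNReal.ofReal (improveProb n f st.x))
      ≤ ∑' r, ratePMF n l st.arch r * (w j * (flipPMF n r st.x).toOuterMeasure S) :=
    calc _ ≤ ratePMF n l st.arch 1 * (w j * (flipPMF n 1 st.x).toOuterMeasure S) := by
          rw [toOuterMeasure_flipPMF_one hn, mul_left_comm]
          gcongr
          exact ofReal_le_ratePMF_one hn hl0 hlsum hst.1 hst.2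
      _ ≤ _ := ENNReal.le_tsum 1
  rw [step, PMF.tsum_bind_mul]
  simp only [PMF.tsum_map_mul]
  exact (add_le_add_right himprove _).trans hrate

theorem stepAbs_drift (hn : 1 ≤ n) (f : Point n → ℝ) {xopt : Point n}
    (hopt : ∀ y, y ≠ xopt → f y < f xopt) {l : ℕ → ℝ} (τ : ℕ → ℝ) (hl0 : ∀ i, 0 ≤ l i)
    (hlsum : ∑ i ∈ Finset.Icc 1 n, l i ≤ 1) {w : ℕ → ℝ≥0∞}
    (hw : ∀ x, x ≠ xopt →
      1 ≤ w (levelIdx n f x) * (ENNReal.ofReal (l 1) * ENNReal.ofReal (improveProb n f x)))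
    {st : State n} (hst : st.ArchValid) :
    ∑' st', stepAbs n f l τ st st' * levelPot n f w st'.x
        + {st : State n | ¬ isOpt n f st.x}.indicator 1 st ≤ levelPot n f w st.x := by
  by_cases hop : isOpt n f st.x
  · simp [stepAbs, hop]
  · have hx : st.x ≠ xopt := mt (isOpt_iff_eq hopt).mpr hop
    rw [stepAbs, if_neg hop, Set.indicator_of_mem (show st ∈ {st : State n | ¬ isOpt n f st.x}
      from hop), Pi.one_apply]
    exact (add_le_add_right (hw st.x hx) _).trans
      (tsum_step_levelPot_add_le hn f τ hl0 hlsum w hst (levelIdx_le_numLevels_sub_one hopt hx))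

theorem expectedRuntime_le_one_add_sum (hn : 1 ≤ n) (f : Point n → ℝ) {xopt : Point n}
    (hopt : ∀ y, y ≠ xopt → f y < f xopt) {l : ℕ → ℝ} (τ : ℕ → ℝ) (hl0 : ∀ i, 0 ≤ l i)
    (hlsum : ∑ i ∈ Finset.Icc 1 n, l i ≤ 1) {w : ℕ → ℝ≥0∞}
    (hw : ∀ x, x ≠ xopt →
      1 ≤ w (levelIdx n f x) * (ENNReal.ofReal (l 1) * ENNReal.ofReal (improveProb n f x))) :
    expectedRuntime n f l τ ≤ 1 + ∑ k ∈ Finset.Icc 1 (numLevels n f - 1), w k := by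
  refine add_le_add_right ?_ 1
  calc ∑' t, (stateAt n f l τ t).toOuterMeasure {s | ¬ isOpt n f s.x}
      ≤ ∑' s, stateAt n f l τ 0 s * levelPot n f w s.x :=
        PMF.tsum_toOuterMeasure_le_of_drift (stepAbs n f l τ) (stateAt n f l τ) (fun _ => rfl)
          (fun _ => archValid_of_mem_support_initPMF hn)
          (fun _ hs _ => archValid_of_mem_support_stepAbs hn f τ hl0 hlsum hs)
          (fun s => levelPot n f w s.x) _
          (fun _ hs => stepAbs_drift hn f hopt τ hl0 hlsum hw hs)
    _ ≤ _ := PMF.tsum_mul_le_of_le fun s _ => levelPot_le_sum s.x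

theorem expectedRuntime_le_fitnessLevels (hn : 1 ≤ n) (f : Point n → ℝ) {xopt : Point n}
    (hopt : ∀ y, y ≠ xopt → f y < f xopt) {l : ℕ → ℝ} (τ : ℕ → ℝ) (hl0 : ∀ i, 0 ≤ l i)
    (hlsum : ∑ i ∈ Finset.Icc 1 n, l i ≤ 1) (hl1 : 0 < l 1) (s : ℕ → ℝ)
    (hs : ∀ j ∈ Finset.Icc 1 (numLevels n f - 1), 0 < s j)
    (hsle : ∀ j ∈ Finset.Icc 1 (numLevels n f - 1), ∀ x : Point n,
      levelIdx n f x = j → s j ≤ improveProb n f x) :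
    expectedRuntime n f l τ ≤
      ENNReal.ofReal (1 + (l 1)⁻¹ * ∑ j ∈ Finset.Icc 1 (numLevels n f - 1), (s j)⁻¹) := by
  have hterm : ∀ j ∈ Finset.Icc 1 (numLevels n f - 1), 0 ≤ (l 1)⁻¹ * (s j)⁻¹ :=
    fun j hj => mul_nonneg (inv_nonneg.mpr hl1.le) (inv_nonneg.mpr (hs j hj).le)
  have hw : ∀ x, x ≠ xopt → 1 ≤ ENNReal.ofReal ((l 1)⁻¹ * (s (levelIdx n f x))⁻¹)
      * (ENNReal.ofReal (l 1) * ENNReal.ofReal (improveProb n f x)) := by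
    intro x hx
    have hj : levelIdx n f x ∈ Finset.Icc 1 (numLevels n f - 1) :=
      Finset.mem_Icc.mpr ⟨one_le_levelIdx f x, levelIdx_le_numLevels_sub_one hopt hx⟩
    have hsj := hs _ hj
    rw [← ENNReal.ofReal_mul hl1.le, ← ENNReal.ofReal_mul (hterm _ hj), ← ENNReal.ofReal_one]
    refine ENNReal.ofReal_le_ofReal ?_
    rw [show (l 1)⁻¹ * (s (levelIdx n f x))⁻¹ * (l 1 * improveProb n f x)
        = improveProb n f x / s (levelIdx n f x) by field_simp]
    exact (one_le_div hsj).mpr (hsle _ hj x rfl)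
  refine (expectedRuntime_le_one_add_sum hn f hopt τ hl0 hlsum
    (w := fun k => ENNReal.ofReal ((l 1)⁻¹ * (s k)⁻¹)) hw).trans_eq ?_
  rw [ENNReal.ofReal_add zero_le_one (by simpa only [Finset.mul_sum] using Finset.sum_nonneg hterm),
    ENNReal.ofReal_one, Finset.mul_sum, ENNReal.ofReal_sum_of_nonneg hterm]

theorem inv_le_improveProb {f : Point n → ℝ} {x : Point n}
    (hx : ∃ i : Fin n, f x < f (flipSet x {i})) : (n : ℝ)⁻¹ ≤ improveProb n f x := by
  obtain ⟨i, hi⟩ := hx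
  rw [improveProb, inv_eq_one_div]
  gcongr
  exact_mod_cast Finset.card_pos.mpr ⟨i, by simpa using hi⟩

theorem flexEA_unimodal_general (n : ℕ) (hn : 1 ≤ n) (f : Point n → ℝ)
    (xopt : Point n) (hopt : ∀ y : Point n, y ≠ xopt → f y < f xopt)
    (huni : ∀ x : Point n, x ≠ xopt → ∃ i : Fin n, f x < f (flipSet x {i}))
    (l τ : ℕ → ℝ) (hl0 : ∀ i, 0 ≤ l i) (hlsum : ∑ i ∈ Finset.Icc 1 n, l i ≤ 1)
    (hl1 : 0 < l 1)
    (s : ℕ → ℝ)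
    (hs : ∀ j ∈ Finset.Icc 1 (numLevels n f - 1), 0 < s j)
    (hsle : ∀ j ∈ Finset.Icc 1 (numLevels n f - 1), ∀ x : Point n,
      levelIdx n f x = j → s j ≤ improveProb n f x) :
    expectedRuntime n f l τ ≤
      ENNReal.ofReal (1 + (l 1)⁻¹ * ∑ j ∈ Finset.Icc 1 (numLevels n f - 1), (s j)⁻¹) ∧
    expectedRuntime n f l τ ≤
      ENNReal.ofReal (1 + (n : ℝ) * ((numLevels n f : ℝ) - 1) * (l 1)⁻¹) := by
  refine ⟨expectedRuntime_le_fitnessLevels hn f hopt τ hl0 hlsum hl1 s hs hsle, ?_⟩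
  have hL : 1 ≤ numLevels n f := levelIdx_eq_numLevels hopt ▸ one_le_levelIdx f xopt
  have hne : ∀ j ∈ Finset.Icc 1 (numLevels n f - 1), ∀ x, levelIdx n f x = j → x ≠ xopt := by
    rintro j hj x hx rfl
    rw [levelIdx_eq_numLevels hopt] at hx
    have := (Finset.mem_Icc.mp hj).2
    omega
  calc expectedRuntime n f l τ
      ≤ ENNReal.ofReal (1 + (l 1)⁻¹ * ∑ _j ∈ Finset.Icc 1 (numLevels n f - 1), ((n : ℝ)⁻¹)⁻¹) :=
        expectedRuntime_le_fitnessLevels hn f hopt τ hl0 hlsum hl1 _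
          (fun _ _ => inv_pos.mpr (by exact_mod_cast hn))
          fun j hj x hx => inv_le_improveProb (huni x (hne j hj x hx))
    _ = _ := by
      rw [Finset.sum_const, Nat.card_Icc, nsmul_eq_mul, inv_inv, Nat.add_sub_cancel,
        Nat.cast_sub hL, Nat.cast_one]
      ring_nf

/-- The flex-EA with `l 1 > 0` on a unimodal function `f` with
`L` fitness levels has expected runtime at most `1 + l₁⁻¹ ∑_{j=1}^{L-1} s_j⁻¹`,
and in particular at most `1 + n (L-1) l₁⁻¹`. -/
theorem flexEA_unimodal (n : ℕ) (hn : 1 ≤ n) (f : Point n → ℝ)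
    (xopt : Point n) (hopt : ∀ y : Point n, y ≠ xopt → f y < f xopt)
    (huni : ∀ x : Point n, x ≠ xopt → ∃ i : Fin n, f x < f (flipSet x {i}))
    (l τ : ℕ → ℝ) (hl0 : ∀ i, 0 ≤ l i) (hlsum : ∑ i ∈ Finset.Icc 1 n, l i ≤ 1)
    (hτ0 : ∀ i, 0 ≤ τ i) (hl1 : 0 < l 1)
    (s : ℕ → ℝ)
    (hs : ∀ j ∈ Finset.Icc 1 (numLevels n f - 1), 0 < s j)
    (hsle : ∀ j ∈ Finset.Icc 1 (numLevels n f - 1), ∀ x : Point n,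
      levelIdx n f x = j → s j ≤ improveProb n f x) :
    expectedRuntime n f l τ ≤
      ENNReal.ofReal (1 + (l 1)⁻¹ * ∑ j ∈ Finset.Icc 1 (numLevels n f - 1), (s j)⁻¹) ∧
    expectedRuntime n f l τ ≤
      ENNReal.ofReal (1 + (n : ℝ) * ((numLevels n f : ℝ) - 1) * (l 1)⁻¹) :=
  flexEA_unimodal_general n hn f xopt hopt huni l τ hl0 hlsum hl1 s hs hsle

end FlexEA
end

section
/- There is a function ε : ℕ → ℝ with ε(n) → 0 as n → ∞ such that the following holds for all n and all a, d, i ∈ ℕ with i ≥ 1, a ≤ n, i ≤ a, d + i ≤ n − a, and d + 2i ≤ n^{1/3}: p(n,a,d,i)/p(n,a,d,0) ≤ (1+ε(n))·( e·(2 + d/i)·(1 − a/n) )^i ≤ (1+ε(n))·e^{d+2i}·(1 − a/n)^i. -/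
/-!
Writing `x_k` for the falling power, `C(N, s + k) · (s + k)_k = C(N, s) · (N - s)_k` turns the
ratio into `C(a, i) · (n-a-d)_i / (n-d)_i · (d+2i)_i / (n-d-i)_i`. Compared factor by factor,
the first quotient is at most `(1 - a/n)^i` and the second at most `((d+2i)/(n-d-2i))^i`,
while `C(a, i) ≤ n^i / i! ≤ (e n / i)^i`. What is left over is
`(n/(n-d-2i))^i ≤ exp((d+2i)²/n)`, and `(d+2i)² ≤ n^{2/3}` bounds this by
`exp(n^{-1/3}) = 1 + ε(n)`. The second inequality is `2 + d/i ≤ e^{1 + d/i}` raised to the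
power `i`.
-/

/-- `p(n,a,d,i) = C(n−a, d+i)·C(a, i)/C(n, d+2i)`: the probability that flipping
`d+2i` positions, chosen uniformly at random, of a bit string of length `n` with
exactly `a` one-bits yields a string with exactly `a+d` one-bits. -/
noncomputable def pflip (n a d i : ℕ) : ℝ :=
  (((n - a).choose (d + i) : ℝ) * (a.choose i : ℝ)) / (n.choose (d + 2 * i) : ℝ)

open Real Finset Filter
open scoped Nat

theorem Nat.choose_add_mul_descFactorial (N s k : ℕ) :
    N.choose (s + k) * (s + k).descFactorial k = N.choose s * (N - s).descFactorial k := by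
  have h := Nat.choose_mul (n := N) (le_add_right s k : s ≤ s + k)
  rw [Nat.add_sub_cancel_left] at h
  rw [Nat.descFactorial_eq_factorial_mul_choose, Nat.descFactorial_eq_factorial_mul_choose,
    ← Nat.choose_symm_add, Nat.mul_left_comm, h, Nat.mul_left_comm]

theorem Nat.cast_descFactorial_le_pow_mul {R : Type*} [CommSemiring R] [PartialOrder R]
    [IsOrderedRing R] {x y k : ℕ} {r : R}
    (h : ∀ j < k, ((x - j : ℕ) : R) ≤ r * (y - j : ℕ)) :
    (x.descFactorial k : R) ≤ r ^ k * y.descFactorial k := by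
  simp only [Nat.descFactorial_eq_prod_range, Nat.cast_prod]
  calc _ ≤ ∏ j ∈ range k, r * ((y - j : ℕ) : R) :=
        prod_le_prod (fun _ _ => Nat.cast_nonneg _) fun j hj => h j (mem_range.1 hj)
    _ = _ := by rw [← pow_card_mul_prod, card_range]

theorem one_sub_natCast_div_nonneg {n a : ℕ} (ha : a ≤ n) : 0 ≤ 1 - (a : ℝ) / n :=
  sub_nonneg.2 (div_le_one_of_le₀ (by exact_mod_cast ha) n.cast_nonneg)

theorem Nat.cast_descFactorial_sub_sub_le {n a : ℕ} (ha : a ≤ n) (d k : ℕ) :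
    ((n - a - d).descFactorial k : ℝ) ≤ (1 - a / n) ^ k * (n - d).descFactorial k := by
  rcases Nat.eq_zero_or_pos a with rfl | ha0
  · simp
  have hn : (0 : ℝ) < n := by exact_mod_cast ha0.trans_le ha
  refine Nat.cast_descFactorial_le_pow_mul fun j _ => ?_
  by_cases hj : a + d + j ≤ n
  · rw [Nat.sub_sub, Nat.sub_sub, Nat.sub_sub, Nat.cast_sub (by omega),
      Nat.cast_sub (by omega)]
    have key : (1 - a / n : ℝ) * (n - (d + j : ℕ)) =
        n - (a + (d + j) : ℕ) + a * (d + j : ℕ) / n := by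
      field_simp
      push_cast
      ring
    rw [key, le_add_iff_nonneg_right]
    positivity
  · rw [show n - a - d - j = 0 by omega, Nat.cast_zero]
    have := one_sub_natCast_div_nonneg ha
    positivity

theorem Nat.cast_descFactorial_le_div_sub_pow_mul {x y k : ℕ} (hk : k < y) :
    (x.descFactorial k : ℝ) ≤ (x / (y - k)) ^ k * y.descFactorial k := by
  have hyk : (0 : ℝ) < y - k := sub_pos.2 (by exact_mod_cast hk)
  refine Nat.cast_descFactorial_le_pow_mul fun j hj => ?_
  calc ((x - j : ℕ) : ℝ) ≤ x := by exact_mod_cast Nat.sub_le x j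
    _ = x / (y - k) * (y - k) := (div_mul_cancel₀ _ hyk.ne').symm
    _ ≤ x / (y - k) * (y - j : ℕ) := by
        gcongr
        rw [Nat.cast_sub (by omega)]
        gcongr

theorem pflip_div_pflip_zero_eq {n a d i : ℕ} (hd : d ≤ n - a) (hn : d + 2 * i ≤ n) :
    pflip n a d i / pflip n a d 0 =
      a.choose i * (((n - a - d).descFactorial i : ℝ) / (n - d).descFactorial i) *
        ((d + 2 * i).descFactorial i / (n - d - i).descFactorial i) := by
  have cast_eq := fun N s k =>
    congrArg (Nat.cast (R := ℝ)) (Nat.choose_add_mul_descFactorial N s k)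
  have h1 := cast_eq (n - a) d i
  have h2 := cast_eq n d i
  have h3 := cast_eq n (d + i) i
  rw [Nat.add_assoc, ← two_mul, ← Nat.sub_sub] at h3
  push_cast at h1 h2 h3
  have pos : ∀ {N k : ℕ}, k ≤ N → (N.descFactorial k : ℝ) ≠ 0 := fun h =>
    Nat.cast_ne_zero.2 (Nat.descFactorial_pos.2 h).ne'
  have hF := pos (Nat.le_add_left i d)
  have hB := pos (by omega : i ≤ d + 2 * i)
  rw [← eq_div_iff hF] at h1 h2
  rw [← eq_div_iff hB, h2] at h3
  have : ((n - a).choose d : ℝ) ≠ 0 := Nat.cast_ne_zero.2 (Nat.choose_pos hd).ne'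
  have : (n.choose d : ℝ) ≠ 0 := Nat.cast_ne_zero.2 (Nat.choose_pos (by omega)).ne'
  have := pos (by omega : i ≤ n - d)
  have := pos (by omega : i ≤ n - d - i)
  simp only [pflip, h1, h3, add_zero, mul_zero, Nat.choose_zero_right, Nat.cast_one, mul_one]
  field_simp

theorem inv_factorial_le_exp_one_div_pow (k : ℕ) : ((k ! : ℝ))⁻¹ ≤ (exp 1 / k) ^ k := by
  rcases Nat.eq_zero_or_pos k with rfl | hk
  · simp
  replace hk : (0 : ℝ) < k := by exact_mod_cast hk
  have h := pow_div_factorial_le_exp (k : ℝ) k.cast_nonneg k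
  rw [← mul_one (k : ℝ), exp_nat_mul, mul_one] at h
  rw [div_pow, inv_le_iff_one_le_mul₀ (by positivity), div_mul_eq_mul_div,
    one_le_div₀ (by positivity)]
  rwa [div_le_iff₀ (by positivity)] at h

theorem pflip_div_pflip_zero_le {n a d i : ℕ} (ha : a ≤ n) (hd : d ≤ n - a)
    (hn : d + 2 * i < n) :
    pflip n a d i / pflip n a d 0 ≤
      (n / (n - (d + 2 * i))) ^ i * (exp 1 * ((d + 2 * i) / i) * (1 - a / n)) ^ i := by
  have hnu : (0 : ℝ) < n - (d + 2 * i) := sub_pos.2 (by exact_mod_cast hn)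
  have hr := one_sub_natCast_div_nonneg ha
  have hchoose : (a.choose i : ℝ) ≤ n ^ i * (exp 1 / i) ^ i :=
    calc (a.choose i : ℝ) ≤ a ^ i / i ! := Nat.choose_le_pow_div i a
      _ ≤ n ^ i * (exp 1 / i) ^ i := by
        rw [div_eq_mul_inv]
        gcongr
        exact inv_factorial_le_exp_one_div_pow i
  have hA : ((n - a - d).descFactorial i : ℝ) / (n - d).descFactorial i ≤ (1 - a / n) ^ i :=
    div_le_of_le_mul₀ (Nat.cast_nonneg _) (by positivity)
      (Nat.cast_descFactorial_sub_sub_le ha d i)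
  have hB : ((d + 2 * i).descFactorial i : ℝ) / (n - d - i).descFactorial i ≤
      ((d + 2 * i) / (n - (d + 2 * i))) ^ i := by
    refine div_le_of_le_mul₀ (Nat.cast_nonneg _) (by positivity) ?_
    refine (Nat.cast_descFactorial_le_div_sub_pow_mul (by omega : i < n - d - i)).trans_eq ?_
    rw [Nat.cast_sub (by omega), Nat.cast_sub (by omega)]
    push_cast
    ring_nf
  rw [pflip_div_pflip_zero_eq hd hn.le]
  calc _ ≤ n ^ i * (exp 1 / i) ^ i * (1 - a / n) ^ i *
        ((d + 2 * i) / (n - (d + 2 * i))) ^ i := by gcongr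
    _ = _ := by
        rw [← mul_pow, ← mul_pow, ← mul_pow, ← mul_pow]
        congr 1
        field_simp

theorem Real.inv_one_sub_le_exp_two_mul {x : ℝ} (hx0 : 0 ≤ x) (hx : x ≤ 1 / 2) :
    (1 - x)⁻¹ ≤ exp (2 * x) := by
  rw [inv_le_iff_one_le_mul₀ (by linarith)]
  nlinarith [add_one_le_exp (2 * x)]

theorem Real.div_sub_pow_le_exp_sq_div {n u : ℝ} {k : ℕ} (hn : 0 < n) (hku : 2 * k ≤ u)
    (hun : 2 * u ≤ n) : (n / (n - u)) ^ k ≤ exp (u ^ 2 / n) := by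
  have hu : 0 ≤ u := le_trans (by positivity) hku
  have hbase : n / (n - u) ≤ exp (2 * (u / n)) := by
    rw [show n / (n - u) = (1 - u / n)⁻¹ by field_simp]
    refine inv_one_sub_le_exp_two_mul (by positivity) ?_
    rw [div_le_iff₀ hn]
    linarith
  calc (n / (n - u)) ^ k ≤ exp (2 * (u / n)) ^ k := by
        gcongr
        exact div_nonneg hn.le (by linarith)
    _ = exp (k * (2 * u) / n) := by rw [← exp_nat_mul]; ring_nf
    _ ≤ exp (u ^ 2 / n) := by
        gcongr
        nlinarith

theorem Real.sq_div_le_rpow_neg_one_third {n u : ℝ} (hn : 0 ≤ n) (hu0 : 0 ≤ u)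
    (hu : u ≤ n ^ (1 / 3 : ℝ)) : u ^ 2 / n ≤ n ^ (-(1 / 3 : ℝ)) := by
  rcases hn.eq_or_lt with rfl | hn
  · simp
  calc u ^ 2 / n ≤ (n ^ (1 / 3 : ℝ)) ^ 2 / n := by gcongr
    _ = n ^ (-(1 / 3 : ℝ)) := by
        rw [← rpow_natCast, ← rpow_mul hn.le, ← rpow_sub_one hn.ne']
        norm_num

theorem exp_one_mul_two_add_div_mul_pow_le (d i : ℕ) {r : ℝ} (hr : 0 ≤ r) :
    (exp 1 * (2 + d / i) * r) ^ i ≤ exp 1 ^ (d + 2 * i) * r ^ i := by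
  rcases Nat.eq_zero_or_pos i with rfl | hi
  · simp
  have hbase : 2 + (d : ℝ) / i ≤ exp (1 + d / i) := by
    linarith [add_one_le_exp (1 + (d : ℝ) / i)]
  calc (exp 1 * (2 + d / i) * r) ^ i = exp 1 ^ i * (2 + d / i) ^ i * r ^ i := by
        rw [mul_pow, mul_pow]
    _ ≤ exp 1 ^ i * exp (1 + d / i) ^ i * r ^ i := by gcongr
    _ = exp 1 ^ (d + 2 * i) * r ^ i := by
        rw [← exp_nat_mul, ← exp_nat_mul, ← exp_nat_mul, ← exp_add]
        congr 2
        field_simp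
        push_cast
        ring

theorem tendsto_exp_rpow_neg_one_third_sub_one :
    Tendsto (fun n : ℕ => exp ((n : ℝ) ^ (-(1 / 3 : ℝ))) - 1) atTop (nhds 0) := by
  have h := (tendsto_rpow_neg_atTop (by norm_num : (0 : ℝ) < 1 / 3)).comp
    tendsto_natCast_atTop_atTop
  simpa using ((continuous_exp.tendsto 0).comp h).sub_const 1

/-- With `ε(n) → 0`, for all `n, a, d, i` with `i ≥ 1`, `a ≤ n`,
`i ≤ a`, `d + i ≤ n − a` and `d + 2i ≤ n^{1/3}`:
`p(n,a,d,i)/p(n,a,d,0) ≤ (1+ε(n))·(e(2+d/i)(1−a/n))^i ≤ (1+ε(n))·e^{d+2i}·(1−a/n)^i`. -/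
theorem pflip_ratio_le :
    ∃ ε : ℕ → ℝ, Filter.Tendsto ε Filter.atTop (nhds 0) ∧
      ∀ n a d i : ℕ, 1 ≤ i → a ≤ n → i ≤ a → d + i ≤ n - a →
        ((d : ℝ) + 2 * i) ≤ (n : ℝ) ^ ((1 : ℝ) / 3) →
        pflip n a d i / pflip n a d 0 ≤
            (1 + ε n) * (Real.exp 1 * (2 + (d : ℝ) / i) * (1 - (a : ℝ) / n)) ^ i ∧
          (1 + ε n) * (Real.exp 1 * (2 + (d : ℝ) / i) * (1 - (a : ℝ) / n)) ^ i ≤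
            (1 + ε n) * Real.exp 1 ^ (d + 2 * i) * (1 - (a : ℝ) / n) ^ i := by
  refine ⟨_, tendsto_exp_rpow_neg_one_third_sub_one, fun n a d i hi ha _ hdi hu => ?_⟩
  simp only [add_sub_cancel]
  have hi' : (1 : ℝ) ≤ i := by exact_mod_cast hi
  have hcube : ((n : ℝ) ^ (1 / 3 : ℝ)) ^ 3 = n := by
    rw [← rpow_natCast, ← rpow_mul n.cast_nonneg]
    norm_num
  have h2u : 2 * ((d : ℝ) + 2 * i) ≤ n := by
    have : 4 ≤ ((n : ℝ) ^ (1 / 3 : ℝ)) ^ 2 := by nlinarith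
    nlinarith
  have hn : d + 2 * i < n := by exact_mod_cast (by linarith : (d : ℝ) + 2 * i < n)
  have hr := one_sub_natCast_div_nonneg ha
  have hdiv : ((d : ℝ) + 2 * i) / i = 2 + d / i := by field_simp; ring
  constructor
  · calc _ ≤ _ := pflip_div_pflip_zero_le ha (by omega) hn
      _ ≤ exp (((d : ℝ) + 2 * i) ^ 2 / n) * _ := by
          gcongr
          exact div_sub_pow_le_exp_sq_div (by linarith) (by linarith) h2u
      _ ≤ _ := by
          rw [hdiv]
          gcongr
          exact sq_div_le_rpow_neg_one_third n.cast_nonneg (by positivity) hu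
  · exact (mul_le_mul_of_nonneg_left (exp_one_mul_two_add_div_mul_pow_le d i hr)
      (exp_pos _).le).trans_eq (mul_assoc _ _ _).symm
end

section
/- Let n, a, d, i ∈ ℕ with a ≤ n, i ≤ a, d + i ≤ n − a, and d + 2i < n. Then ( (n−a−d)^{\underline{i}} · a^{\underline{i}} ) / (n−d)^{\underline{2i}} ≤ ( (n−a)^i · n^i ) / (n−d−2i)^{2i}, where b^{\underline{c}} := b·(b−1)···(b−c+1) denotes the falling factorial. -/
/-! Bound each falling factorial in the numerator above by a power of its top entry, and the
falling factorial in the denominator below by a power of its bottom entry `n - d - 2i + 1`. -/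

namespace Nat

theorem descFactorial_le_pow_of_le {m n : ℕ} (h : m ≤ n) (k : ℕ) : m.descFactorial k ≤ n ^ k :=
  (m.descFactorial_le_pow k).trans (Nat.pow_le_pow_left h k)

theorem pow_le_descFactorial_of_add_le {m n k : ℕ} (h : m + k ≤ n + 1) :
    m ^ k ≤ n.descFactorial k :=
  (Nat.pow_le_pow_left (by omega) k).trans (n.pow_sub_le_descFactorial k)

end Nat

theorem descFactorial_ratio_le_general (n a d i : ℕ) (ha : a ≤ n) (h2i : d + 2 * i < n) :
    (((n - a - d).descFactorial i : ℝ) * (a.descFactorial i : ℝ)) /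
        ((n - d).descFactorial (2 * i) : ℝ) ≤
      (((n : ℝ) - a) ^ i * (n : ℝ) ^ i) / ((n : ℝ) - d - 2 * i) ^ (2 * i) := by
  have hbase : ((n - d - 2 * i : ℕ) : ℝ) = (n : ℝ) - d - 2 * i := by
    push_cast [Nat.sub_sub, Nat.cast_sub h2i.le]
    ring
  rw [← Nat.cast_sub ha, ← hbase]
  have hbase_pos : 0 < n - d - 2 * i := by omega
  apply div_le_div₀ (by positivity)
  · exact_mod_cast Nat.mul_le_mul (Nat.descFactorial_le_pow_of_le (Nat.sub_le _ _) i)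
      (Nat.descFactorial_le_pow_of_le ha i)
  · positivity
  · exact_mod_cast Nat.pow_le_descFactorial_of_add_le (by omega)

/-- For `a ≤ n`, `i ≤ a`, `d + i ≤ n − a` and `d + 2i < n`:
`((n−a−d)^{i̲} · a^{i̲}) / (n−d)^{2i̲} ≤ ((n−a)^i · n^i) / (n−d−2i)^{2i}`,
where `b^{c̲}` is the falling factorial (`Nat.descFactorial`). -/
theorem descFactorial_ratio_le (n a d i : ℕ) (ha : a ≤ n) (hi : i ≤ a)
    (hdi : d + i ≤ n - a) (h2i : d + 2 * i < n) :
    (((n - a - d).descFactorial i : ℝ) * (a.descFactorial i : ℝ)) /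
        ((n - d).descFactorial (2 * i) : ℝ) ≤
      (((n : ℝ) - a) ^ i * (n : ℝ) ^ i) / ((n : ℝ) - d - 2 * i) ^ (2 * i) :=
  descFactorial_ratio_le_general n a d i ha h2i
end

section
/- Let n, k ∈ ℕ with 2 ≤ k and k − 1 ≤ n/2. Then ∑_{i=1}^{k−1} C(n,i) ≤ ( (n−k+2)/(n−2k+3) ) · ( k/(n−k+1) ) · C(n,k). -/
set_option maxHeartbeats 1000000 in
/-- For `2 ≤ k` and `k − 1 ≤ n/2`:
`∑_{i=1}^{k−1} C(n,i) ≤ ((n−k+2)/(n−2k+3)) · (k/(n−k+1)) · C(n,k)`. -/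
theorem sum_choose_le' (n k : ℕ) (hk : 2 ≤ k) (hkn : (k : ℝ) - 1 ≤ (n : ℝ) / 2) :
    (∑ i ∈ Finset.Icc 1 (k - 1), (n.choose i : ℝ)) ≤
      (((n : ℝ) - k + 2) / ((n : ℝ) - 2 * k + 3)) * ((k : ℝ) / ((n : ℝ) - k + 1)) *
        (n.choose k : ℝ) := by
  have h2k : 2 * k ≤ n + 2 := by
    have : (2 * k : ℝ) ≤ (n : ℝ) + 2 := by linarith
    exact_mod_cast this
  have hkn' : k ≤ n := by omega
  have hkR : (2:ℝ) ≤ (k:ℝ) := by exact_mod_cast hk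
  have hnR : (k:ℝ) ≤ (n:ℝ) := by exact_mod_cast hkn'
  have h2kR : (2*k:ℝ) ≤ (n:ℝ) + 2 := by exact_mod_cast h2k
  set x := (n : ℝ) with hx
  set r : ℝ := ((k : ℝ) - 1) / (x - k + 2) with hrdef
  have hxk2 : (0:ℝ) < x - k + 2 := by linarith
  have hr0 : 0 ≤ r := div_nonneg (by linarith) hxk2.le
  have hr1 : r < 1 := by rw [div_lt_one hxk2]; linarith
  -- one step ratio bound
  have step : ∀ i : ℕ, i + 1 ≤ k - 1 → (n.choose i : ℝ) ≤ r * n.choose (i + 1) := by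
    intro i hi
    have hik : i + 2 ≤ k := by omega
    have hikR : (i:ℝ) + 2 ≤ (k:ℝ) := by exact_mod_cast hik
    have hin : i ≤ n := by omega
    have hid : n.choose (i+1) * (i+1) = n.choose i * (n - i) := Nat.choose_succ_right_eq n i
    have hidR : (n.choose (i+1) : ℝ) * ((i:ℝ)+1) = (n.choose i : ℝ) * (x - i) := by
      have := congrArg (Nat.cast : ℕ → ℝ) hid
      push_cast [hin] at this
      linarith
    have hni : (0:ℝ) < x - i := by linarith
    rw [hrdef, div_mul_eq_mul_div, le_div_iff₀ hxk2]
    have hch : (0:ℝ) ≤ (n.choose (i+1) : ℝ) := Nat.cast_nonneg _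
    have hkey : ((i:ℝ)+1) * (x - k + 2) ≤ ((k:ℝ)-1) * (x - i) := by nlinarith
    nlinarith [mul_le_mul_of_nonneg_left hkey hch]
  -- iterate
  have aux : ∀ j i : ℕ, i + j = k - 1 → (n.choose i : ℝ) ≤ r ^ j * n.choose (k - 1) := by
    intro j
    induction j with
    | zero => intro i hi; simp [show i = k - 1 by omega]
    | succ j ih =>
      intro i hi
      have h1 : (n.choose i : ℝ) ≤ r * n.choose (i+1) := step i (by omega)
      have h2 : (n.choose (i+1) : ℝ) ≤ r ^ j * n.choose (k - 1) := ih (i+1) (by omega)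
      calc (n.choose i : ℝ) ≤ r * n.choose (i+1) := h1
        _ ≤ r * (r ^ j * n.choose (k - 1)) := by
            exact mul_le_mul_of_nonneg_left h2 hr0
        _ = r ^ (j+1) * n.choose (k - 1) := by ring
  have hsum1 : (∑ i ∈ Finset.Icc 1 (k - 1), (n.choose i : ℝ)) ≤
      ∑ i ∈ Finset.Icc 1 (k - 1), r ^ (k - 1 - i) * n.choose (k - 1) := by
    apply Finset.sum_le_sum
    intro i hi
    simp only [Finset.mem_Icc] at hi
    exact aux (k - 1 - i) i (by omega)
  have hsum2 : (∑ i ∈ Finset.Icc 1 (k - 1), r ^ (k - 1 - i) * (n.choose (k - 1) : ℝ)) =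
      (∑ j ∈ Finset.range (k - 1), r ^ j) * n.choose (k - 1) := by
    rw [Finset.sum_mul]
    apply Finset.sum_bij' (fun i _ => k - 1 - i) (fun j _ => k - 1 - j)
    · intro i hi; simp only [Finset.mem_Icc] at hi; simp only [Finset.mem_range]; omega
    · intro j hj; simp only [Finset.mem_range] at hj; simp only [Finset.mem_Icc]; omega
    · intro i hi; simp only [Finset.mem_Icc] at hi; omega
    · intro j hj; simp only [Finset.mem_range] at hj; omega
    · intro i hi; rfl
  have hgeom : (∑ j ∈ Finset.range (k - 1), r ^ j) ≤ 1 / (1 - r) := by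
    rw [geom_sum_eq hr1.ne]
    have hpow : 0 ≤ r ^ (k-1) := pow_nonneg hr0 _
    have h1r0 : (0:ℝ) < 1 - r := by linarith
    have heq : (r ^ (k-1) - 1)/(r - 1) = (1 - r ^ (k-1))/(1 - r) := by
      rw [← neg_div_neg_eq]; ring_nf
    rw [heq]
    exact div_le_div_of_nonneg_right (by linarith) h1r0.le
  have hchpos : (0:ℝ) ≤ (n.choose (k-1) : ℝ) := Nat.cast_nonneg _
  have hrel : ((k:ℝ)) * n.choose k = (x - k + 1) * n.choose (k - 1) := by
    have hid : n.choose (k - 1 + 1) * (k - 1 + 1) = n.choose (k-1) * (n - (k-1)) :=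
      Nat.choose_succ_right_eq n (k - 1)
    rw [show k - 1 + 1 = k by omega] at hid
    have := congrArg (Nat.cast : ℕ → ℝ) hid
    rw [Nat.cast_mul, Nat.cast_mul, Nat.cast_sub (show k - 1 ≤ n by omega),
      Nat.cast_sub (show 1 ≤ k by omega)] at this
    push_cast at this ⊢
    nlinarith [this]
  have h2k3 : (0:ℝ) < x - 2*k + 3 := by linarith
  have hk1 : (0:ℝ) < x - k + 1 := by linarith
  have h1r : 1 - r = (x - 2*k + 3) / (x - k + 2) := by
    rw [hrdef]; field_simp; ring
  calc (∑ i ∈ Finset.Icc 1 (k - 1), (n.choose i : ℝ))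
      ≤ (∑ j ∈ Finset.range (k - 1), r ^ j) * n.choose (k - 1) := by
        rw [← hsum2]; exact hsum1
    _ ≤ (1 / (1 - r)) * n.choose (k - 1) := mul_le_mul_of_nonneg_right hgeom hchpos
    _ = ((x - k + 2) / (x - 2*k + 3)) * n.choose (k - 1) := by
        rw [h1r, one_div, inv_div]
    _ = ((x - k + 2) / (x - 2 * k + 3)) * ((k:ℝ) / (x - k + 1)) * n.choose k := by
        rw [mul_assoc]
        congr 1
        rw [div_mul_eq_mul_div, eq_div_iff hk1.ne']
        nlinarith [hrel]
end

section
/- Let n, k ∈ ℕ with k ≤ n/2. Then ∑_{i=1}^{k} C(n,i) ≤ ( (n−k+1)/(n−2k+1) ) · C(n,k). -/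
lemma choose_le_ratio_pow (n k : ℕ) (h2k : 2 * k ≤ n) :
    ∀ d i, i + d = k →
      (n.choose i : ℝ) ≤ ((k : ℝ) / ((n : ℝ) - k + 1)) ^ d * (n.choose k : ℝ) := by
  intro d
  induction d with
  | zero => intro i hi; subst hi; simp
  | succ d ih =>
    intro i hi
    have hik : i + 1 ≤ k := by omega
    have hin : i < n := by omega
    have hC1 : (n.choose (i + 1) : ℝ) ≤ ((k : ℝ) / ((n : ℝ) - k + 1)) ^ d * n.choose k :=
      ih (i + 1) (by omega)
    have hid : (n.choose (i + 1) : ℝ) * (i + 1) = (n.choose i : ℝ) * ((n : ℝ) - i) := by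
      have h := Nat.choose_succ_right_eq n i
      have h2 : ((n - i : ℕ) : ℝ) = (n : ℝ) - i := by
        push_cast [Nat.cast_sub hin.le]; ring
      calc (n.choose (i + 1) : ℝ) * (i + 1) = ((n.choose (i + 1) * (i + 1) : ℕ) : ℝ) := by
            push_cast; ring
        _ = ((n.choose i * (n - i) : ℕ) : ℝ) := by rw [h]
        _ = (n.choose i : ℝ) * ((n : ℝ) - i) := by push_cast [Nat.cast_sub hin.le]; ring
    have hnk : (0 : ℝ) < (n : ℝ) - k + 1 := by
      have : (k : ℝ) ≤ n := by exact_mod_cast (by omega : k ≤ n)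
      linarith
    have hni : (0 : ℝ) < (n : ℝ) - i := by
      have : (i : ℝ) < n := by exact_mod_cast hin
      linarith
    have hcross : ((i : ℝ) + 1) * ((n : ℝ) - k + 1) ≤ (k : ℝ) * ((n : ℝ) - i) := by
      have hk1 : ((i : ℝ) + 1) ≤ k := by exact_mod_cast hik
      nlinarith [mul_nonneg (by linarith : (0:ℝ) ≤ (k : ℝ) - i - 1)
        (by positivity : (0:ℝ) ≤ (n : ℝ) + 1)]
    have hCpos : (0 : ℝ) ≤ (n.choose (i + 1) : ℝ) := by positivity
    have key : (n.choose i : ℝ) ≤ ((k : ℝ) / ((n : ℝ) - k + 1)) * n.choose (i + 1) := by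
      rw [div_mul_eq_mul_div, le_div_iff₀ hnk]
      nlinarith [mul_le_mul_of_nonneg_left hcross hCpos]
    have hr0 : (0 : ℝ) ≤ (k : ℝ) / ((n : ℝ) - k + 1) := by positivity
    calc (n.choose i : ℝ) ≤ ((k : ℝ) / ((n : ℝ) - k + 1)) * n.choose (i + 1) := key
      _ ≤ ((k : ℝ) / ((n : ℝ) - k + 1)) * (((k : ℝ) / ((n : ℝ) - k + 1)) ^ d * n.choose k) :=
          mul_le_mul_of_nonneg_left hC1 hr0
      _ = ((k : ℝ) / ((n : ℝ) - k + 1)) ^ (d + 1) * n.choose k := by ring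

/-- For `k ≤ n/2`:
`∑_{i=1}^{k} C(n,i) ≤ ((n−k+1)/(n−2k+1)) · C(n,k)`. -/
theorem sum_choose_le (n k : ℕ) (hkn : (k : ℝ) ≤ (n : ℝ) / 2) :
    (∑ i ∈ Finset.Icc 1 k, (n.choose i : ℝ)) ≤
      (((n : ℝ) - k + 1) / ((n : ℝ) - 2 * k + 1)) * (n.choose k : ℝ) := by
  have h2k : 2 * k ≤ n := by
    have : (2 * k : ℝ) ≤ n := by linarith
    exact_mod_cast this
  set r : ℝ := (k : ℝ) / ((n : ℝ) - k + 1) with hr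
  have hnk : (0 : ℝ) < (n : ℝ) - k + 1 := by
    have : (k : ℝ) ≤ n := by exact_mod_cast (by omega : k ≤ n)
    linarith
  have hn2k : (0 : ℝ) < (n : ℝ) - 2 * k + 1 := by
    have : (2 * k : ℝ) ≤ n := by exact_mod_cast h2k
    linarith
  have hr0 : 0 ≤ r := by positivity
  have hr1 : r < 1 := by
    rw [hr, div_lt_one hnk]
    have : (2 * k : ℝ) ≤ n := by exact_mod_cast h2k
    linarith
  have hCpos : (0 : ℝ) ≤ (n.choose k : ℝ) := by positivity
  have step1 : (∑ i ∈ Finset.Icc 1 k, (n.choose i : ℝ)) ≤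
      ∑ i ∈ Finset.Icc 1 k, r ^ (k - i) * (n.choose k : ℝ) := by
    refine Finset.sum_le_sum fun i hi => ?_
    rw [Finset.mem_Icc] at hi
    exact choose_le_ratio_pow n k h2k (k - i) i (by omega)
  have step2 : (∑ i ∈ Finset.Icc 1 k, r ^ (k - i) * (n.choose k : ℝ)) =
      (∑ j ∈ Finset.range k, r ^ j) * (n.choose k : ℝ) := by
    rw [← Finset.sum_mul]
    congr 1
    rw [← Finset.Ico_add_one_right_eq_Icc, Finset.sum_Ico_eq_sum_range]
    have h1 : k + 1 - 1 = k := by omega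
    rw [h1]
    rw [← Finset.sum_range_reflect (fun j => r ^ j) k]
    refine Finset.sum_congr rfl fun j hj => ?_
    rw [Finset.mem_range] at hj
    congr 1
    omega
  have h1r : (0 : ℝ) < 1 - r := by linarith
  have step3 : (∑ j ∈ Finset.range k, r ^ j) ≤ 1 / (1 - r) := by
    rw [geom_sum_eq (ne_of_lt hr1)]
    have hrk : (0 : ℝ) ≤ r ^ k := by positivity
    have hflip : (r ^ k - 1) / (r - 1) = (1 - r ^ k) / (1 - r) := by
      rw [← neg_div_neg_eq]; ring_nf
    rw [hflip, div_le_div_iff₀ h1r h1r]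
    nlinarith
  have heq : 1 / (1 - r) = ((n : ℝ) - k + 1) / ((n : ℝ) - 2 * k + 1) := by
    have h1mr : 1 - r = ((n : ℝ) - 2 * k + 1) / ((n : ℝ) - k + 1) := by
      rw [hr]; field_simp; ring
    rw [h1mr, one_div_div]
  calc (∑ i ∈ Finset.Icc 1 k, (n.choose i : ℝ))
      ≤ (∑ j ∈ Finset.range k, r ^ j) * (n.choose k : ℝ) := by rw [← step2]; exact step1
    _ ≤ (1 / (1 - r)) * (n.choose k : ℝ) :=
        mul_le_mul_of_nonneg_right step3 hCpos
    _ = ((n : ℝ) - k + 1) / ((n : ℝ) - 2 * k + 1) * (n.choose k : ℝ) := by rw [heq]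
end

section
/- Let n, k ∈ ℕ with 1 ≤ k ≤ n. Then C(n,k)·(k/n)^k·(1 − k/n)^{n−k} ≤ e^{k²/n} / √(2πk). In particular, the probability that a binomial random variable with n trials and success probability k/n equals k is at most e^{k²/n} / √(2πk). -/
open Real Nat

/-! Since `C(n,k) ≤ n^k/k!`, we get `C(n,k) (k/n)^k ≤ k^k/k!`, and `1 - x ≤ e^{-x}` gives
`(1 - k/n)^(n-k) ≤ e^{-k(n-k)/n}`. Stirling's lower bound turns `k^k/k!` into `e^k/√(2πk)`, and
`e^k · e^{-k(n-k)/n} = e^{k²/n}`. -/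

theorem one_sub_pow_le_exp_neg_mul {x : ℝ} (hx : x ≤ 1) (m : ℕ) :
    (1 - x) ^ m ≤ exp (-(x * m)) := by
  calc (1 - x) ^ m ≤ exp (-x) ^ m := pow_le_pow_left₀ (by linarith) (one_sub_le_exp_neg x) m
    _ = exp (-(x * m)) := by rw [← exp_nat_mul]; ring_nf

theorem choose_mul_div_pow_le (n k : ℕ) :
    (n.choose k : ℝ) * ((k : ℝ) / n) ^ k ≤ (k : ℝ) ^ k / k ! := by
  have hmul : (n : ℝ) * (k / n) ≤ k := by
    rcases eq_or_ne n 0 with rfl | hn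
    · simp
    · rw [mul_div_cancel₀ _ (by exact_mod_cast hn)]
  calc (n.choose k : ℝ) * ((k : ℝ) / n) ^ k ≤ (n : ℝ) ^ k / k ! * ((k : ℝ) / n) ^ k := by
        gcongr; exact choose_le_pow_div k n
    _ = ((n : ℝ) * (k / n)) ^ k / k ! := by ring
    _ ≤ (k : ℝ) ^ k / k ! := by gcongr

theorem pow_div_factorial_le_exp_div_sqrt {k : ℕ} (hk : k ≠ 0) :
    (k : ℝ) ^ k / k ! ≤ exp k / √(2 * π * k) := by
  have hstirling := Stirling.le_factorial_stirling k
  rw [div_le_div_iff₀ (by positivity) (by positivity)]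
  calc (k : ℝ) ^ k * √(2 * π * k) = exp k * (√(2 * π * k) * (k / exp 1) ^ k) := by
        rw [div_pow, ← exp_nat_mul, mul_one]; field_simp
    _ ≤ exp k * k ! := by gcongr

/-- For `1 ≤ k ≤ n`:
`C(n,k)·(k/n)^k·(1 − k/n)^{n−k} ≤ e^{k²/n}/√(2πk)`; this is an upper bound on
the probability that a binomial random variable with `n` trials and success
probability `k/n` equals `k`. -/
theorem choose_mul_pow_le (n k : ℕ) (h1 : 1 ≤ k) (h2 : k ≤ n) :
    (n.choose k : ℝ) * ((k : ℝ) / n) ^ k * (1 - (k : ℝ) / n) ^ (n - k) ≤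
      Real.exp ((k : ℝ) ^ 2 / n) / Real.sqrt (2 * Real.pi * k) := by
  have hn : (n : ℝ) ≠ 0 := by norm_cast; omega
  have hkn : (k : ℝ) / n ≤ 1 := div_le_one_of_le₀ (by exact_mod_cast h2) (by positivity)
  calc (n.choose k : ℝ) * ((k : ℝ) / n) ^ k * (1 - (k : ℝ) / n) ^ (n - k)
      ≤ (k : ℝ) ^ k / k ! * exp (-((k : ℝ) / n * (n - k : ℕ))) := by
        gcongr
        · exact choose_mul_div_pow_le n k
        · exact one_sub_pow_le_exp_neg_mul hkn _
    _ ≤ exp k / √(2 * π * k) * exp (-((k : ℝ) / n * (n - k : ℕ))) := by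
        gcongr ?_ * _; exact pow_div_factorial_le_exp_div_sqrt (by omega)
    _ = exp ((k : ℝ) ^ 2 / n) / √(2 * π * k) := by
        rw [div_mul_eq_mul_div, ← exp_add, Nat.cast_sub h2]
        congr 2
        field_simp
        ring
end

section
/- Let n ≥ 1, let l : {1,…,n} → ℝ satisfy 0 ≤ l_i for all i and ∑_{i=1}^n l_i ≤ 1, and let P ⊆ {1,…,n} be nonempty. Then there exists c ≥ 0 such that the vector p defined by p_i = max(l_i, c) for i ∈ P and p_i = l_i for i ∉ P satisfies ∑_{i=1}^n p_i = 1; consequently p is a probability vector with p_i ≥ l_i for all i ∈ {1,…,n}. -/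
/-- Correctness of the frequency-redistribution (water-filling)
step of the flex-EA: given lower bounds `l` with total mass at most `1` on
`{1, …, n}` and a nonempty archive `P ⊆ {1, …, n}`, there is a level `c ≥ 0` such
that `p i = max (l i) c` for `i ∈ P` and `p i = l i` otherwise sums to `1`;
consequently `p` is a probability vector with `p i ≥ l i` everywhere. -/
theorem waterfilling_exists (n : ℕ) (hn : 1 ≤ n) (l : ℕ → ℝ)
    (hl0 : ∀ i ∈ Finset.Icc 1 n, 0 ≤ l i)
    (hsum : ∑ i ∈ Finset.Icc 1 n, l i ≤ 1)
    (P : Finset ℕ) (hP : P ⊆ Finset.Icc 1 n) (hPne : P.Nonempty) :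
    ∃ c : ℝ, 0 ≤ c ∧
      (∑ i ∈ Finset.Icc 1 n, if i ∈ P then max (l i) c else l i) = 1 ∧
      ∀ i ∈ Finset.Icc 1 n, l i ≤ if i ∈ P then max (l i) c else l i := by
  set f : ℝ → ℝ := fun c => ∑ i ∈ Finset.Icc 1 n, if i ∈ P then max (l i) c else l i with hf
  have hcont : Continuous f := by
    apply continuous_finset_sum
    intro i _
    by_cases h : i ∈ P
    · simp only [h, if_true]
      exact continuous_const.max continuous_id
    · simp only [h, if_false]
      exact continuous_const
  have hf0 : f 0 ≤ 1 := by
    have : f 0 = ∑ i ∈ Finset.Icc 1 n, l i := by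
      apply Finset.sum_congr rfl
      intro i hi
      by_cases h : i ∈ P
      · simp [h, max_eq_left (hl0 i hi)]
      · simp [h]
    linarith
  have hf1 : 1 ≤ f 1 := by
    obtain ⟨i₀, hi₀⟩ := hPne
    have hi₀' : i₀ ∈ Finset.Icc 1 n := hP hi₀
    have h1 : (1 : ℝ) ≤ if i₀ ∈ P then max (l i₀) 1 else l i₀ := by
      simp [hi₀, le_max_right]
    calc (1 : ℝ) ≤ if i₀ ∈ P then max (l i₀) 1 else l i₀ := h1
      _ ≤ f 1 := by
        apply Finset.single_le_sum (f := fun i => if i ∈ P then max (l i) 1 else l i)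
          _ hi₀'
        intro i hi
        by_cases h : i ∈ P
        · simp only [h, if_true]
          exact le_trans (hl0 i hi) (le_max_left _ _)
        · simp only [h, if_false]
          exact hl0 i hi
  have := intermediate_value_Icc (by norm_num : (0:ℝ) ≤ 1) hcont.continuousOn
  obtain ⟨c, hc, hfc⟩ := this ⟨hf0, hf1⟩
  exact ⟨c, hc.1, hfc, fun i _ => by by_cases h : i ∈ P <;> simp [h, le_max_left]⟩
end
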